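/- arXiv:physics/0512258 — 5 statements merged into one kernel-verified Lean document; each statement's English description precedes it below -/
import Mathlib

section
/- Let h > 0 and suppose M₁, M₂ : ℝ × ℝ → ℝ both solve the Bürgers-type equation ∂M/∂t + (1/2)(∂M/∂x)² - (h/2)∂²M/∂x² = 0. Then for any constants μ₁, μ₂ ∈ ℝ, the function M = -h log(exp(-(M₁+μ₁)/h) + exp(-(M₂+μ₂)/h)) also solves this equation. -/
/-!
Cole–Hopf transform. For a positive `u`, the Burgers residual of `-h log u` equals
`-(h / u)` times the heat residual of `u`. Hence each `uᵢ = exp (-(Mᵢ + μᵢ) / h)` solves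
the linear heat equation `u_t = (h / 2) u_xx`, so does `u₁ + u₂`, and therefore
`M = -h log (u₁ + u₂)` solves the Burgers-type equation.
-/

open Real

noncomputable def burgersResidual (h : ℝ) (M : ℝ → ℝ → ℝ) (x t : ℝ) : ℝ :=
  deriv (M x) t + (1 / 2) * (deriv (fun y => M y t) x) ^ 2
    - (h / 2) * deriv (deriv (fun y => M y t)) x

noncomputable def heatResidual (h : ℝ) (u : ℝ → ℝ → ℝ) (x t : ℝ) : ℝ :=
  deriv (u x) t - (h / 2) * deriv (deriv (fun y => u y t)) x

structure SpaceTimeRegular (u : ℝ → ℝ → ℝ) : Prop where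
  contDiff_space : ∀ t, ContDiff ℝ 2 (fun x => u x t)
  differentiable_time : ∀ x, Differentiable ℝ (u x)

namespace SpaceTimeRegular

variable {u v : ℝ → ℝ → ℝ}

theorem comp (hu : SpaceTimeRegular u) {f : ℝ → ℝ} (hf : ContDiff ℝ 2 f) :
    SpaceTimeRegular (fun x t => f (u x t)) :=
  ⟨fun t => hf.comp (hu.contDiff_space t),
    fun x => (hf.differentiable two_ne_zero).comp (hu.differentiable_time x)⟩

theorem add (hu : SpaceTimeRegular u) (hv : SpaceTimeRegular v) :
    SpaceTimeRegular (fun x t => u x t + v x t) :=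
  ⟨fun t => (hu.contDiff_space t).add (hv.contDiff_space t),
    fun x => (hu.differentiable_time x).add (hv.differentiable_time x)⟩

theorem differentiable_space (hu : SpaceTimeRegular u) (t : ℝ) :
    Differentiable ℝ (fun x => u x t) :=
  (hu.contDiff_space t).differentiable two_ne_zero

theorem differentiable_deriv_space (hu : SpaceTimeRegular u) (t : ℝ) :
    Differentiable ℝ (deriv fun x => u x t) :=
  (hu.contDiff_space t).differentiable_deriv_two

end SpaceTimeRegular

theorem burgersResidual_add_const (h : ℝ) (M : ℝ → ℝ → ℝ) (c : ℝ) :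
    burgersResidual h (fun x t => M x t + c) = burgersResidual h M := by
  ext x t
  simp only [burgersResidual, deriv_add_const, deriv_add_const']

theorem heatResidual_add (h : ℝ) {u v : ℝ → ℝ → ℝ} (hu : SpaceTimeRegular u)
    (hv : SpaceTimeRegular v) (x t : ℝ) :
    heatResidual h (fun x t => u x t + v x t) x t
      = heatResidual h u x t + heatResidual h v x t := by
  have hx : deriv (fun y => u y t + v y t)
      = fun y => deriv (fun y => u y t) y + deriv (fun y => v y t) y :=
    funext fun y => deriv_fun_add (hu.differentiable_space t y) (hv.differentiable_space t y)
  simp only [heatResidual]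
  rw [hx, deriv_fun_add (hu.differentiable_time x t) (hv.differentiable_time x t),
    deriv_fun_add (hu.differentiable_deriv_space t x) (hv.differentiable_deriv_space t x)]
  ring

theorem burgersResidual_neg_mul_log (h : ℝ) {u : ℝ → ℝ → ℝ} (hu : SpaceTimeRegular u)
    (hpos : ∀ x t, 0 < u x t) (x t : ℝ) :
    burgersResidual h (fun x t => -h * log (u x t)) x t = -(h / u x t) * heatResidual h u x t := by
  have ht : HasDerivAt (fun s => -h * log (u x s)) (-h * (deriv (u x) t / u x t)) t :=
    ((hu.differentiable_time x t).hasDerivAt.log (hpos x t).ne').const_mul (-h)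
  have hx : deriv (fun y => -h * log (u y t))
      = fun y => -h * (deriv (fun y => u y t) y / u y t) :=
    funext fun y =>
      (((hu.differentiable_space t y).hasDerivAt.log (hpos y t).ne').const_mul (-h)).deriv
  have hxx : HasDerivAt (deriv fun y => -h * log (u y t))
      (-h * ((deriv (deriv fun y => u y t) x * u x t
        - deriv (fun y => u y t) x * deriv (fun y => u y t) x) / u x t ^ 2)) x := by
    rw [hx]
    exact ((hu.differentiable_deriv_space t x).hasDerivAt.div
      (hu.differentiable_space t x).hasDerivAt (hpos x t).ne').const_mul (-h)
  simp only [burgersResidual, heatResidual]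
  rw [ht.deriv, hxx.deriv, hx]
  have := (hpos x t).ne'
  field_simp
  ring

theorem heatResidual_exp_neg_div_eq_zero {h : ℝ} (hh : h ≠ 0) {M : ℝ → ℝ → ℝ}
    (hM : SpaceTimeRegular M) (hb : ∀ x t, burgersResidual h M x t = 0) (x t : ℝ) :
    heatResidual h (fun x t => exp (-M x t / h)) x t = 0 := by
  have hlog : (fun x t => -h * log (exp (-M x t / h))) = M := by
    ext x t
    rw [log_exp]
    field_simp
  have key := burgersResidual_neg_mul_log h (hM.comp (f := fun m => exp (-m / h)) (by fun_prop))
    (fun x t => exp_pos _) x t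
  rw [hlog, hb] at key
  exact (mul_eq_zero.mp key.symm).resolve_left (neg_ne_zero.mpr (div_ne_zero hh (exp_pos _).ne'))

theorem stmt_2 (h : ℝ) (hh : 0 < h) (M₁ M₂ : ℝ → ℝ → ℝ)
    (hx₁ : ∀ t, ContDiff ℝ 2 (fun x => M₁ x t))
    (ht₁ : ∀ x, Differentiable ℝ (M₁ x))
    (hx₂ : ∀ t, ContDiff ℝ 2 (fun x => M₂ x t))
    (ht₂ : ∀ x, Differentiable ℝ (M₂ x))
    (hb₁ : ∀ x t, deriv (M₁ x) t + (1 / 2) * (deriv (fun y => M₁ y t) x) ^ 2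
      - (h / 2) * deriv (deriv (fun y => M₁ y t)) x = 0)
    (hb₂ : ∀ x t, deriv (M₂ x) t + (1 / 2) * (deriv (fun y => M₂ y t) x) ^ 2
      - (h / 2) * deriv (deriv (fun y => M₂ y t)) x = 0)
    (μ₁ μ₂ : ℝ) (M : ℝ → ℝ → ℝ)
    (hM : ∀ x t, M x t =
      -h * Real.log (Real.exp (-(M₁ x t + μ₁) / h) + Real.exp (-(M₂ x t + μ₂) / h))) :
    ∀ x t, deriv (M x) t + (1 / 2) * (deriv (fun y => M y t) x) ^ 2
      - (h / 2) * deriv (deriv (fun y => M y t)) x = 0 := by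
  have shift₁ : SpaceTimeRegular (fun x t => M₁ x t + μ₁) :=
    SpaceTimeRegular.comp ⟨hx₁, ht₁⟩ (contDiff_id.add contDiff_const)
  have shift₂ : SpaceTimeRegular (fun x t => M₂ x t + μ₂) :=
    SpaceTimeRegular.comp ⟨hx₂, ht₂⟩ (contDiff_id.add contDiff_const)
  have heat₁ := heatResidual_exp_neg_div_eq_zero hh.ne' shift₁
    (by rw [burgersResidual_add_const]; exact hb₁)
  have heat₂ := heatResidual_exp_neg_div_eq_zero hh.ne' shift₂
    (by rw [burgersResidual_add_const]; exact hb₂)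
  have hu₁ := shift₁.comp (f := fun m => exp (-m / h)) (by fun_prop)
  have hu₂ := shift₂.comp (f := fun m => exp (-m / h)) (by fun_prop)
  have hM' :
      M = fun x t => -h * log (exp (-(M₁ x t + μ₁) / h) + exp (-(M₂ x t + μ₂) / h)) :=
    funext₂ hM
  intro x t
  change burgersResidual h M x t = 0
  rw [hM', burgersResidual_neg_mul_log h (hu₁.add hu₂) (fun x t => by positivity),
    heatResidual_add h hu₁ hu₂, heat₁, heat₂, add_zero, mul_zero]
end

section
/- For n ≥ 2 arbitrary real numbers x₁,…,x_n and natural N ≥ 1, define z(N) = ∑ exp(∑_{i=1}^n x_i k_i), the sum over all tuples (k₁,…,k_n) of nonnegative integers with ∑ k_i = N. Then z(N)² > z(N-1) · z(N+1). -/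
noncomputable def zsum (n : ℕ) (x : Fin n → ℝ) (N : ℕ) : ℝ :=
  ∑ k ∈ Finset.Nat.antidiagonalTuple n N, Real.exp (∑ i, x i * (k i : ℝ))

lemma zsum_succ (n : ℕ) (x : Fin (n + 1) → ℝ) (N : ℕ) :
    zsum (n + 1) x N =
      ∑ j ∈ Finset.range (N + 1), Real.exp (x 0) ^ j * zsum n (fun i => x i.succ) (N - j) := by
  unfold zsum
  symm
  simp_rw [Finset.mul_sum]
  rw [← Finset.sum_sigma (Finset.range (N + 1))
    (fun j => Finset.Nat.antidiagonalTuple n (N - j))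
    (fun p => Real.exp (x 0) ^ p.1 * Real.exp (∑ i, x i.succ * (p.2 i : ℝ)))]
  refine Finset.sum_nbij' (fun p => Fin.cons p.1 p.2) (fun k => ⟨k 0, Fin.tail k⟩) ?_ ?_ ?_ ?_ ?_
  · rintro ⟨j, k⟩ hp
    simp only [Finset.mem_sigma, Finset.mem_range, Finset.Nat.mem_antidiagonalTuple] at hp
    have h1 : j ≤ N := Nat.lt_succ_iff.mp hp.1
    have h2 : ∑ i, k i = N - j := hp.2
    rw [Finset.Nat.mem_antidiagonalTuple, Fin.sum_cons, h2]
    show j + (N - j) = N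
    omega
  · intro k hk
    rw [Finset.Nat.mem_antidiagonalTuple] at hk
    simp only [Finset.mem_sigma, Finset.mem_range, Finset.Nat.mem_antidiagonalTuple]
    have h : k 0 + ∑ i, Fin.tail k i = N := by
      rw [← hk, Fin.sum_univ_succ]; rfl
    omega
  · rintro ⟨j, k⟩ hp
    simp [Fin.tail_cons]
  · intro k hk
    exact Fin.cons_self_tail k
  · rintro ⟨j, k⟩ hp
    rw [← Real.exp_nat_mul, ← Real.exp_add, Fin.sum_univ_succ]
    simp [Fin.cons_succ, mul_comm]


lemma cross_mul (b : ℕ → ℝ) (pos : ∀ m, 0 < b m)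
    (lc : ∀ m, b m * b (m + 2) ≤ b (m + 1) ^ 2) :
    ∀ i j, i ≤ j → b i * b (j + 1) ≤ b (i + 1) * b j := by
  intro i j h
  induction j, h using Nat.le_induction with
  | base => exact le_of_eq (mul_comm _ _)
  | succ j hij ih =>
    nlinarith [lc j, pos i, pos (i+1), pos j, pos (j+1), pos (j+2), mul_pos (pos j) (pos (j+1))]

lemma conv_pos (b : ℕ → ℝ) (q : ℝ) (hq : 0 < q) (pos : ∀ m, 0 < b m) (N : ℕ) :
    0 < ∑ j ∈ Finset.range (N + 1), q ^ j * b (N - j) := by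
  apply Finset.sum_pos
  · intro j _
    exact mul_pos (pow_pos hq j) (pos _)
  · exact Finset.nonempty_range_add_one

lemma conv_rec (b : ℕ → ℝ) (q : ℝ) (N : ℕ) :
    ∑ j ∈ Finset.range (N + 1 + 1), q ^ j * b (N + 1 - j) =
      q * (∑ j ∈ Finset.range (N + 1), q ^ j * b (N - j)) + b (N + 1) := by
  rw [Finset.sum_range_succ' (fun j => q ^ j * b (N + 1 - j)), Finset.mul_sum]
  simp [pow_succ, mul_comm, mul_assoc, mul_left_comm]

lemma conv_strict (b : ℕ → ℝ) (q : ℝ) (hq : 0 < q) (pos : ∀ m, 0 < b m)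
    (lc : ∀ m, b m * b (m + 2) ≤ b (m + 1) ^ 2) (M : ℕ) :
    (∑ j ∈ Finset.range (M + 1), q ^ j * b (M - j)) *
      (∑ j ∈ Finset.range (M + 2 + 1), q ^ j * b (M + 2 - j)) <
    (∑ j ∈ Finset.range (M + 1 + 1), q ^ j * b (M + 1 - j)) ^ 2 := by
  set a : ℕ → ℝ := fun N => ∑ j ∈ Finset.range (N + 1), q ^ j * b (N - j) with ha
  have apos : ∀ N, 0 < a N := fun N => conv_pos b q hq pos N
  have arec : ∀ N, a (N + 1) = q * a N + b (N + 1) := fun N => conv_rec b q N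
  have key : a M * b (M + 2) < a (M + 1) * b (M + 1) := by
    have h1 : a M * b (M + 2) ≤
        ∑ j ∈ Finset.range (M + 1), q ^ j * (b (M + 1 - j) * b (M + 1)) := by
      rw [ha, Finset.sum_mul]
      apply Finset.sum_le_sum
      intro j hj
      rw [Finset.mem_range] at hj
      have hjM : j ≤ M := Nat.lt_succ_iff.mp hj
      have h2 : M + 1 - j = (M - j) + 1 := by omega
      have h3 : M - j ≤ M + 1 := by omega
      rw [mul_assoc, h2]
      exact mul_le_mul_of_nonneg_left
        (by simpa using cross_mul b pos lc (M - j) (M + 1) h3) (le_of_lt (pow_pos hq j))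
    have h4 : ∑ j ∈ Finset.range (M + 1), q ^ j * (b (M + 1 - j) * b (M + 1)) <
        a (M + 1) * b (M + 1) := by
      rw [ha, Finset.sum_mul, Finset.sum_range_succ (fun j => q ^ j * b (M + 1 - j) * b (M + 1))]
      have h5 : 0 < q ^ (M + 1) * b (M + 1 - (M + 1)) * b (M + 1) :=
        mul_pos (mul_pos (pow_pos hq _) (pos _)) (pos _)
      simp only [mul_assoc]
      linarith [h5]
    linarith
  have e1 : a (M + 1) ^ 2 - a M * a (M + 2) = a (M + 1) * b (M + 1) - a M * b (M + 2) := by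
    rw [arec (M + 1), arec M]; ring
  nlinarith [key, e1]

lemma zsum_pos (n : ℕ) (x : Fin (n + 1) → ℝ) (N : ℕ) : 0 < zsum (n + 1) x N := by
  apply Finset.sum_pos
  · intro k _
    exact Real.exp_pos _
  · refine ⟨Fin.cons N 0, ?_⟩
    rw [Finset.Nat.mem_antidiagonalTuple, Fin.sum_cons]
    simp

lemma zsum_lc (n : ℕ) (x : Fin (n + 1) → ℝ) (N : ℕ) :
    zsum (n + 1) x N * zsum (n + 1) x (N + 2) ≤ zsum (n + 1) x (N + 1) ^ 2 := by
  induction n generalizing N with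
  | zero =>
    have h : ∀ M : ℕ, zsum 1 x M = Real.exp (x 0 * M) := by
      intro M
      unfold zsum
      rw [Finset.Nat.antidiagonalTuple_one, Finset.sum_singleton, Fin.sum_univ_one]
      simp
    rw [h, h, h, ← Real.exp_add, ← Real.exp_nat_mul]
    apply le_of_eq
    congr 1
    push_cast
    ring
  | succ m ih =>
    rw [zsum_succ, zsum_succ, zsum_succ]
    exact le_of_lt (conv_strict (zsum (m + 1) fun i => x i.succ) (Real.exp (x 0))
      (Real.exp_pos _) (zsum_pos m _) (fun M => ih _ M) N)

theorem stmt_6 (n : ℕ) (hn : 2 ≤ n) (x : Fin n → ℝ) (N : ℕ) (hN : 1 ≤ N) :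
    zsum n x N ^ 2 > zsum n x (N - 1) * zsum n x (N + 1) := by
  obtain ⟨m, rfl⟩ : ∃ m, n = m + 2 := ⟨n - 2, by omega⟩
  obtain ⟨M, rfl⟩ : ∃ M, N = M + 1 := ⟨N - 1, by omega⟩
  have h1 : (M + 1 : ℕ) - 1 = M := rfl
  rw [h1, zsum_succ, zsum_succ, zsum_succ]
  exact conv_strict (zsum (m + 1) fun i => x i.succ) (Real.exp (x 0))
    (Real.exp_pos _) (zsum_pos m _) (fun K => zsum_lc m _ K) M
end

section
/- Let (p_l)_{l≥0} be nonnegative reals with ∑ p_l = 1, finite mean m = ∑ l p_l and finite variance D > 0, and let L be an index maximizing p_l. Then |L - m| ≤ (3D)^{3/4}. -/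
/-!
Write `δ = |L - m|` and `q = p L`. The term of the mode in the variance gives `δ² q ≤ D`, so the
point is a lower bound on `q`. A window of `j + 1` consecutive integers carries mass at most
`(j + 1) q`, and it can be centred so that `|l - m| ≥ (j + 1) / 2` outside it; since
`(l - m)² ≥ ∑ (2j + 1) / 4` over the windows `j < K` missing `l`, summing against `p` gives the
bathtub bound `6 K² ≤ q K (K + 1) (4 K - 1) + 24 D`.

For `D ≥ 1/5`, taking `8 D ≤ K² ≤ 20 D` turns it into `27 D q² ≥ 1`, whence `δ⁴ ≤ 27 D³`.
For `D < 1/5`, `K = 2` gives `q ≥ 2/5`; then `δ ≤ 1/2`, so every other integer is at distance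
at least `1 - δ` from `m`, and as `∑ (l - m) p l = 0` the remaining first moment balances
`δ q`, giving `δ q ≤ D`.
-/

open Finset

lemma HasSum.ite_mem_zero {ι α : Type*} [DecidableEq ι] [AddCommGroup α] [TopologicalSpace α]
    [IsTopologicalAddGroup α] {f : ι → α} {a : α} (hf : HasSum f a) (s : Finset ι) :
    HasSum (fun i => if i ∈ s then 0 else f i) (a - ∑ i ∈ s, f i) := by
  have hs : HasSum (fun i => if i ∈ s then f i else 0) (∑ i ∈ s, f i) := by
    have : HasSum (fun i => if i ∈ s then f i else 0) (∑ i ∈ s, if i ∈ s then f i else 0) :=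
      hasSum_sum_of_ne_finset_zero fun i hi => if_neg hi
    rwa [sum_congr rfl fun i hi => if_pos hi] at this
  convert hf.sub hs using 1
  funext i
  split_ifs <;> simp

lemma HasSum.sub_sum_le_sub_sum {ι : Type*} [DecidableEq ι] {f g : ι → ℝ} {a b : ℝ}
    (hf : HasSum f a) (hg : HasSum g b) (s : Finset ι) (h : ∀ i ∉ s, f i ≤ g i) :
    a - ∑ i ∈ s, f i ≤ b - ∑ i ∈ s, g i :=
  hasSum_le (fun i => by split_ifs with hi; exacts [le_rfl, h i hi])
    (hf.ite_mem_zero s) (hg.ite_mem_zero s)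

lemma HasSum.norm_sum_le_of_hasSum_zero {ι E : Type*} [DecidableEq ι] [SeminormedAddCommGroup E]
    {f : ι → E} {g : ι → ℝ} {b : ℝ} (hf : HasSum f 0) (hg : HasSum g b) (s : Finset ι)
    (h : ∀ i ∉ s, ‖f i‖ ≤ g i) :
    ‖∑ i ∈ s, f i‖ ≤ b - ∑ i ∈ s, g i := by
  simpa using (hf.ite_mem_zero s).norm_le_of_bounded (hg.ite_mem_zero s) fun i => by
    split_ifs with hi
    exacts [by simp, h i hi]

lemma exists_Ico_half_le_abs_sub (x : ℝ) (n : ℕ) :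
    ∃ c : ℕ, ∀ l ∉ Ico c (c + n), (n : ℝ) / 2 ≤ |(l : ℝ) - x| := by
  refine ⟨⌈x - n / 2⌉₊, fun l hl => ?_⟩
  rw [mem_Ico, not_and_or, not_le, not_lt] at hl
  rcases hl with hl | hl
  · have := Nat.lt_ceil.1 hl
    rw [abs_sub_comm]
    exact le_trans (by linarith) (le_abs_self _)
  · have h1 := Nat.le_ceil (x - n / 2)
    have h2 : ((⌈x - n / 2⌉₊ + n : ℕ) : ℝ) ≤ l := by exact_mod_cast hl
    push_cast at h2
    exact le_trans (by linarith) (le_abs_self _)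

lemma sum_range_two_mul_add_one {R : Type*} [CommSemiring R] (n : ℕ) :
    ∑ j ∈ range n, (2 * j + 1 : R) = n ^ 2 := by
  induction n with
  | zero => simp
  | succ n ih => rw [sum_range_succ, ih]; push_cast; ring

lemma six_mul_sum_range_two_mul_add_one_mul_add_one {R : Type*} [CommRing R] (n : ℕ) :
    6 * ∑ j ∈ range n, (2 * j + 1 : R) * (j + 1) = n * (n + 1) * (4 * n - 1) := by
  induction n with
  | zero => simp
  | succ n ih => rw [sum_range_succ, mul_add, ih]; push_cast; ring

lemma sum_range_mul_ite_le_four_mul_sq_mul {r t : ℝ} (ht : 0 ≤ t) (A : ℕ → Prop)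
    [DecidablePred A] (h : ∀ j, ¬ A j → ((j : ℝ) + 1) / 2 ≤ |r|) (K : ℕ) :
    ∑ j ∈ range K, (2 * j + 1 : ℝ) * (if A j then 0 else t) ≤ 4 * r ^ 2 * t := by
  induction K with
  | zero => simp only [range_zero, sum_empty]; positivity
  | succ K ih =>
    by_cases hK : A K
    · simpa [sum_range_succ, hK] using ih
    · calc ∑ j ∈ range (K + 1), (2 * j + 1 : ℝ) * (if A j then 0 else t)
          ≤ ∑ j ∈ range (K + 1), (2 * j + 1 : ℝ) * t :=
            sum_le_sum fun j _ => by gcongr; split_ifs; exacts [ht, le_rfl]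
        _ = ((K : ℝ) + 1) ^ 2 * t := by
            rw [← sum_mul, sum_range_two_mul_add_one]; push_cast; ring
        _ ≤ 4 * r ^ 2 * t := by
            gcongr
            have := mul_self_le_mul_self (by positivity) (h K hK)
            nlinarith [sq_abs r]

lemma six_mul_sq_le_of_forall_le {p : ℕ → ℝ} (hp : ∀ l, 0 ≤ p l) (hsum : HasSum p 1)
    {m D : ℝ} (hD : HasSum (fun l : ℕ => ((l : ℝ) - m) ^ 2 * p l) D)
    {q : ℝ} (hq : ∀ l, p l ≤ q) (K : ℕ) :
    6 * (K : ℝ) ^ 2 ≤ q * (K * (K + 1) * (4 * K - 1)) + 24 * D := by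
  choose c hc using fun j : ℕ => exists_Ico_half_le_abs_sub m (j + 1)
  set W : ℕ → Finset ℕ := fun j => Ico (c j) (c j + (j + 1))
  have hW : ∀ j, ∑ l ∈ W j, p l ≤ (j + 1) * q := fun j => by
    simpa [W] using sum_le_card_nsmul (W j) p q fun l _ => hq l
  have hlayers : ∀ l, ∑ j ∈ range K, (2 * j + 1 : ℝ) * (if l ∈ W j then 0 else p l)
      ≤ 4 * (((l : ℝ) - m) ^ 2 * p l) := fun l => by
    rw [← mul_assoc]
    exact sum_range_mul_ite_le_four_mul_sq_mul (hp l) (fun j => l ∈ W j)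
      (fun j hj => by exact_mod_cast hc j l hj) K
  have hlayers_sum := hasSum_le hlayers
    (hasSum_sum fun j _ => (hsum.ite_mem_zero (W j)).mul_left (2 * j + 1 : ℝ)) (hD.mul_left 4)
  have hcube := six_mul_sum_range_two_mul_add_one_mul_add_one (R := ℝ) K
  have hcompare : ∑ j ∈ range K, (2 * j + 1 : ℝ) * (1 - (j + 1) * q)
      ≤ ∑ j ∈ range K, (2 * j + 1 : ℝ) * (1 - ∑ l ∈ W j, p l) :=
    sum_le_sum fun j _ => by gcongr; exact hW j
  have hexpand : ∑ j ∈ range K, (2 * j + 1 : ℝ) * (1 - (j + 1) * q)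
      = K ^ 2 - q * ∑ j ∈ range K, (2 * j + 1 : ℝ) * (j + 1) := by
    simp only [mul_sub, mul_one, sum_sub_distrib, sum_range_two_mul_add_one, mul_sum]
    congr 1
    exact sum_congr rfl fun j _ => by ring
  rw [← hcube]
  linarith

lemma exists_two_le_nat_sq_between {D : ℝ} (hD : 1 / 5 ≤ D) :
    ∃ K : ℕ, 2 ≤ K ∧ 8 * D ≤ (K : ℝ) ^ 2 ∧ (K : ℝ) ^ 2 ≤ 20 * D := by
  obtain hD2 | hD2 := le_or_gt D (1 / 2)
  · exact ⟨2, le_rfl, by norm_num; linarith, by norm_num; linarith⟩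
  set s := √(8 * D)
  have hs : s ^ 2 = 8 * D := Real.sq_sqrt (by linarith)
  have hs2 : 2 ≤ s := by nlinarith [Real.sqrt_nonneg (8 * D)]
  refine ⟨⌈s⌉₊, ?_, ?_, ?_⟩
  · exact_mod_cast hs2.trans (Nat.le_ceil s)
  · nlinarith [Nat.le_ceil s]
  · nlinarith [Nat.ceil_lt_add_one (by linarith : 0 ≤ s)]

lemma one_le_mul_sq_of_forall_le {p : ℕ → ℝ} (hp : ∀ l, 0 ≤ p l) (hsum : HasSum p 1)
    {m D : ℝ} (hD : HasSum (fun l : ℕ => ((l : ℝ) - m) ^ 2 * p l) D) (hD5 : 1 / 5 ≤ D)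
    {q : ℝ} (hq : ∀ l, p l ≤ q) : 1 ≤ 27 * D * q ^ 2 := by
  obtain ⟨K, hK2, hK8, hK20⟩ := exists_two_le_nat_sq_between hD5
  have hbound := six_mul_sq_le_of_forall_le hp hsum hD hq K
  have hk : (2 : ℝ) ≤ K := by exact_mod_cast hK2
  set k : ℝ := (K : ℝ)
  set A := k * (k + 1) * (4 * k - 1)
  have hA : 0 < A := mul_pos (by positivity) (by linarith)
  have hk6 : k ^ 6 ≤ 32 * D * (k ^ 2 - 4 * D) ^ 2 := by
    nlinarith [mul_nonneg (sq_nonneg (k ^ 2 - 8 * D)) (by linarith : 0 ≤ 20 * D - k ^ 2),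
      mul_nonneg (mul_nonneg (by linarith : 0 ≤ 4 * D) (by linarith : 0 ≤ k ^ 2 - 8 * D))
        (by linarith : 0 ≤ 24 * D - k ^ 2)]
  have hA4 : 8 * ((k + 1) * (4 * k - 1)) ^ 2 ≤ 243 * k ^ 4 := by
    nlinarith [pow_nonneg (by linarith : 0 ≤ k - 2) 3, pow_nonneg (by linarith : 0 ≤ k - 2) 4,
      sq_nonneg (k - 2)]
  have hA2 : A ^ 2 ≤ 27 * D * (6 * k ^ 2 - 24 * D) ^ 2 := by
    have : k ^ 2 * (8 * ((k + 1) * (4 * k - 1)) ^ 2) ≤ k ^ 2 * (243 * k ^ 4) := by gcongr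
    nlinarith
  have hqA : 6 * k ^ 2 - 24 * D ≤ q * A := by linarith
  have hpos : 0 ≤ 6 * k ^ 2 - 24 * D := by linarith
  have hsq : A ^ 2 * 1 ≤ A ^ 2 * (27 * D * q ^ 2) :=
    calc A ^ 2 * 1 ≤ 27 * D * (6 * k ^ 2 - 24 * D) ^ 2 := by rw [mul_one]; exact hA2
      _ ≤ 27 * D * (q * A) ^ 2 := by gcongr
      _ = A ^ 2 * (27 * D * q ^ 2) := by ring
  exact le_of_mul_le_mul_left hsq (by positivity)

lemma sq_abs_sub_mul_le {p : ℕ → ℝ} (hp : ∀ l, 0 ≤ p l) {m D : ℝ}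
    (hD : HasSum (fun l : ℕ => ((l : ℝ) - m) ^ 2 * p l) D) (L : ℕ) :
    |(L : ℝ) - m| ^ 2 * p L ≤ D := by
  rw [sq_abs]
  exact le_hasSum hD L fun l _ => mul_nonneg (sq_nonneg _) (hp l)

lemma one_sub_abs_sub_le_abs_sub {l L : ℕ} (h : l ≠ L) (x : ℝ) :
    1 - |(L : ℝ) - x| ≤ |(l : ℝ) - x| := by
  have h1 : (1 : ℝ) ≤ |(l : ℝ) - L| := by
    have : (1 : ℤ) ≤ |(l : ℤ) - L| := Int.one_le_abs (sub_ne_zero.2 (by exact_mod_cast h))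
    exact_mod_cast this
  linarith [abs_sub_le (l : ℝ) x L, abs_sub_comm (L : ℝ) x]

lemma abs_sub_pow_four_le_of_lt {p : ℕ → ℝ} (hp : ∀ l, 0 ≤ p l) (hsum : HasSum p 1) {m D : ℝ}
    (hm : HasSum (fun l : ℕ => (l : ℝ) * p l) m)
    (hD : HasSum (fun l : ℕ => ((l : ℝ) - m) ^ 2 * p l) D) (hD5 : D < 1 / 5)
    {L : ℕ} (hL : ∀ l, p l ≤ p L) : |(L : ℝ) - m| ^ 4 ≤ 27 * D ^ 3 := by
  set δ := |(L : ℝ) - m|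
  set q := p L
  have hD0 : 0 ≤ D := hD.nonneg fun l => mul_nonneg (sq_nonneg _) (hp l)
  have hδ0 : 0 ≤ δ := abs_nonneg _
  have hmode : δ ^ 2 * q ≤ D := sq_abs_sub_mul_le hp hD L
  have hq : 2 / 5 ≤ q := by
    have := six_mul_sq_le_of_forall_le hp hsum hD hL 2
    norm_num at this
    linarith
  have hfar : ∀ l ∉ ({L} : Finset ℕ), 1 - δ ≤ |(l : ℝ) - m| := fun l hl =>
    one_sub_abs_sub_le_abs_sub (notMem_singleton.1 hl) m
  have hδ : δ ≤ 1 / 2 := by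
    by_contra! hδ
    -- otherwise `D ≥ δ² q + (1 - δ)² (1 - q) > 1/5`
    have hδ1 : δ < 1 := by nlinarith
    have hvar := hsum.mul_left ((1 - δ) ^ 2) |>.sub_sum_le_sub_sum hD {L} fun l hl =>
      mul_le_mul_of_nonneg_right
        (by rw [← sq_abs ((l : ℝ) - m)]; exact pow_le_pow_left₀ (by linarith) (hfar l hl) 2)
        (hp l)
    rw [sum_singleton, sum_singleton, ← sq_abs ((L : ℝ) - m)] at hvar
    nlinarith
  have hmean : HasSum (fun l : ℕ => (1 - δ) * (((l : ℝ) - m) * p l)) 0 := by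
    simpa [sub_mul] using (hm.sub (hsum.mul_left m)).mul_left (1 - δ)
  have hbalance := hmean.norm_sum_le_of_hasSum_zero hD {L} fun l hl => by
    rw [Real.norm_eq_abs, abs_mul, abs_mul, abs_of_nonneg (hp l), abs_of_nonneg (by linarith),
      ← mul_assoc, ← sq_abs]
    exact mul_le_mul_of_nonneg_right (by nlinarith [hfar l hl]) (hp l)
  rw [sum_singleton, sum_singleton, Real.norm_eq_abs, abs_mul, abs_mul, abs_of_nonneg (hp L),
    abs_of_nonneg (by linarith), ← sq_abs] at hbalance
  have hδD : δ * q ≤ D := by nlinarith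
  have hδ3 : δ ≤ 3 * D := by nlinarith
  calc δ ^ 4 ≤ (3 * D) ^ 4 := by gcongr
    _ ≤ 27 * D ^ 3 := by nlinarith [pow_nonneg hD0 3]

theorem stmt_10_general (p : ℕ → ℝ) (hp : ∀ l, 0 ≤ p l) (hsum : HasSum p 1)
    (m D : ℝ) (hm : HasSum (fun l : ℕ => (l : ℝ) * p l) m)
    (hD : HasSum (fun l : ℕ => ((l : ℝ) - m) ^ 2 * p l) D)
    (L : ℕ) (hL : ∀ l, p l ≤ p L) :
    |(L : ℝ) - m| ≤ (3 * D) ^ ((3 : ℝ) / 4) := by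
  have hD0 : 0 ≤ D := hD.nonneg fun l => mul_nonneg (sq_nonneg _) (hp l)
  suffices h : |(L : ℝ) - m| ^ 4 ≤ 27 * D ^ 3 by
    rw [← pow_le_pow_iff_left₀ (abs_nonneg _) (by positivity) four_ne_zero,
      ← Real.rpow_natCast ((3 * D) ^ ((3 : ℝ) / 4)),
      ← Real.rpow_mul (by positivity)]
    norm_num
    linarith
  obtain hD5 | hD5 := lt_or_ge D (1 / 5)
  · exact abs_sub_pow_four_le_of_lt hp hsum hm hD hD5 hL
  have hq := one_le_mul_sq_of_forall_le hp hsum hD hD5 hL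
  have hmode := sq_abs_sub_mul_le hp hD L
  calc |(L : ℝ) - m| ^ 4 ≤ |(L : ℝ) - m| ^ 4 * (27 * D * p L ^ 2) :=
        le_mul_of_one_le_right (by positivity) hq
    _ = 27 * D * (|(L : ℝ) - m| ^ 2 * p L) ^ 2 := by ring
    _ ≤ 27 * D * D ^ 2 := by
        have := mul_nonneg (sq_nonneg |(L : ℝ) - m|) (hp L)
        gcongr
    _ = 27 * D ^ 3 := by ring

theorem stmt_10 (p : ℕ → ℝ) (hp : ∀ l, 0 ≤ p l) (hsum : HasSum p 1)
    (m D : ℝ) (hm : HasSum (fun l : ℕ => (l : ℝ) * p l) m)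
    (hD : HasSum (fun l : ℕ => ((l : ℝ) - m) ^ 2 * p l) D) (hDpos : 0 < D)
    (L : ℕ) (hL : ∀ l, p l ≤ p L) :
    |(L : ℝ) - m| ≤ (3 * D) ^ ((3 : ℝ) / 4) :=
  stmt_10_general p hp hsum m D hm hD L hL
end

section
/- With Γ(N) as in the grand sum (Γ(N) = ∑_{∑k_i = N} ∏ C(k_i+g_i-1, k_i) e^{-β∑λ_i k_i}), for every N ≥ 1 and β > 0: Γ(N)² > Γ(N-1)·Γ(N+1), provided G = ∑ g_i ≥ 2. -/
noncomputable def GammaSum (n : ℕ) (lam : Fin n → ℝ) (g : Fin n → ℕ) (β : ℝ) (N : ℕ) : ℝ :=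
  ∑ k ∈ Finset.Nat.antidiagonalTuple n N,
    (∏ i, ((k i + g i - 1).choose (k i) : ℝ)) * Real.exp (-β * ∑ i, lam i * (k i : ℝ))

/-!
`Γ(N)` is the `N`-th term of the convolution of the sequences `wᵢ(k) = C(k + gᵢ - 1, k) rᵢᵏ`,
`rᵢ = e^{-βλᵢ}`. Each `wᵢ` is positive and log-concave, since `wᵢ(k+1) / wᵢ(k) = rᵢ (k + gᵢ) / (k + 1)`
is non-increasing in `k`, strictly so when `gᵢ ≥ 2`. The convolution `c` of two positive log-concave
sequences is even strictly log-concave: by the Binet–Cauchy identity, `c(m+1)² - c(m) c(m+2)` is a sum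
of products of pairs of `2 × 2` minors, which log-concavity makes nonnegative and of which one is
positive. For a single factor (`n = 1`) strictness comes from `g₁ = G ≥ 2` instead.
-/

open Finset

theorem Nat.succ_mul_multichoose_succ (g k : ℕ) :
    (k + 1) * multichoose g (k + 1) = (g + k) * multichoose g k := by
  rcases g with _ | g
  · rcases k with _ | k <;> simp [multichoose_zero_succ]
  · rw [multichoose_eq, multichoose_eq, show g + 1 + (k + 1) - 1 = g + k + 1 by omega,
      show g + 1 + k - 1 = g + k by omega, mul_comm, ← add_one_mul_choose_eq]
    ring

theorem Nat.multichoose_pos {g : ℕ} (hg : 1 ≤ g) (k : ℕ) : 0 < multichoose g k := by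
  rw [multichoose_eq]
  exact choose_pos (by omega)

theorem Nat.multichoose_mul_multichoose_add_two (g k : ℕ) :
    multichoose g k * multichoose g (k + 2) * ((k + 2) * (g + k))
      = multichoose g (k + 1) ^ 2 * ((k + 1) * (g + k + 1)) := by
  have h₁ := succ_mul_multichoose_succ g k
  have h₂ := succ_mul_multichoose_succ g (k + 1)
  calc multichoose g k * multichoose g (k + 2) * ((k + 2) * (g + k))
      = ((g + k) * multichoose g k) * ((k + 1 + 1) * multichoose g (k + 1 + 1)) := by ring
    _ = ((k + 1) * multichoose g (k + 1)) * ((g + (k + 1)) * multichoose g (k + 1)) := by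
      rw [h₁, h₂]
    _ = multichoose g (k + 1) ^ 2 * ((k + 1) * (g + k + 1)) := by ring

theorem Nat.multichoose_mul_multichoose_add_two_le (g k : ℕ) :
    multichoose g k * multichoose g (k + 2) ≤ multichoose g (k + 1) ^ 2 := by
  rcases g with _ | g
  · simp [multichoose_zero_succ]
  · refine Nat.le_of_mul_le_mul_right ?_ (show 0 < (k + 2) * (g + 1 + k) by positivity)
    rw [multichoose_mul_multichoose_add_two]
    exact Nat.mul_le_mul_left _ (by nlinarith)

theorem Nat.multichoose_mul_multichoose_add_two_lt {g : ℕ} (hg : 2 ≤ g) (k : ℕ) :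
    multichoose g k * multichoose g (k + 2) < multichoose g (k + 1) ^ 2 := by
  have hpos := multichoose_pos (by omega : 1 ≤ g) (k + 1)
  refine Nat.lt_of_mul_lt_mul_right (a := (k + 2) * (g + k)) ?_
  rw [multichoose_mul_multichoose_add_two]
  exact Nat.mul_lt_mul_of_pos_left (by nlinarith) (by positivity)

theorem Finset.Nat.sum_antidiagonalTuple_succ {M : Type*} [AddCommMonoid M] (k n : ℕ)
    (f : (Fin (k + 1) → ℕ) → M) :
    ∑ x ∈ antidiagonalTuple (k + 1) n, f x
      = ∑ p ∈ antidiagonal n, ∑ x ∈ antidiagonalTuple k p.2, f (Fin.cons p.1 x) := by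
  rw [sum_sigma']
  refine sum_nbij' (fun x => ⟨(x 0, n - x 0), Fin.tail x⟩) (fun y => Fin.cons y.1.1 y.2)
    ?_ ?_ (fun x _ => Fin.cons_self_tail x) ?_ (fun _ _ => by simp)
  · intro x hx
    simp only [mem_sigma, HasAntidiagonal.mem_antidiagonal, mem_antidiagonalTuple,
      Fin.sum_univ_succ] at hx ⊢
    exact ⟨by omega, by simp only [Fin.tail]; omega⟩
  · rintro ⟨⟨a, b⟩, y⟩ hy
    simp only [mem_sigma, HasAntidiagonal.mem_antidiagonal, mem_antidiagonalTuple,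
      Fin.sum_univ_succ, Fin.cons_zero, Fin.cons_succ] at hy ⊢
    omega
  · rintro ⟨⟨a, b⟩, y⟩ hy
    simp only [mem_sigma, HasAntidiagonal.mem_antidiagonal, mem_antidiagonalTuple] at hy
    simp [← hy.1]

theorem Finset.two_mul_sum_mul_sum_sub_sum_mul_sum {ι R : Type*} [CommRing R] (s : Finset ι)
    (f g u v : ι → R) :
    2 * ((∑ i ∈ s, f i * u i) * (∑ i ∈ s, g i * v i)
        - (∑ i ∈ s, f i * v i) * (∑ i ∈ s, g i * u i))
      = ∑ i ∈ s, ∑ j ∈ s, (f i * g j - f j * g i) * (u i * v j - u j * v i) := by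
  have hswap : ∀ F G : ι → R, (∑ i ∈ s, F i) * (∑ i ∈ s, G i) = ∑ i ∈ s, ∑ j ∈ s, F j * G i :=
    fun F G => by rw [sum_mul_sum, sum_comm]
  rw [mul_sub, two_mul, two_mul]
  nth_rewrite 2 [hswap]
  nth_rewrite 3 [hswap]
  simp only [sum_mul_sum, ← sum_add_distrib, ← sum_sub_distrib]
  exact sum_congr rfl fun i _ => sum_congr rfl fun j _ => by ring

theorem Finset.sum_mul_sum_lt_sum_mul_sum {ι R : Type*} [LinearOrder ι] [CommRing R]
    [LinearOrder R] [IsStrictOrderedRing R] {s : Finset ι} {f g u v : ι → R}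
    (hfg : ∀ i ∈ s, ∀ j ∈ s, i < j → f j * g i ≤ f i * g j)
    (huv : ∀ i ∈ s, ∀ j ∈ s, i < j → u j * v i ≤ u i * v j)
    {i₀ j₀ : ι} (hi₀ : i₀ ∈ s) (hj₀ : j₀ ∈ s)
    (hfg₀ : f j₀ * g i₀ < f i₀ * g j₀) (huv₀ : u j₀ * v i₀ < u i₀ * v j₀) :
    (∑ i ∈ s, f i * v i) * (∑ i ∈ s, g i * u i)
      < (∑ i ∈ s, f i * u i) * (∑ i ∈ s, g i * v i) := by
  have hterm : ∀ i ∈ s, ∀ j ∈ s, 0 ≤ (f i * g j - f j * g i) * (u i * v j - u j * v i) := by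
    intro i hi j hj
    rcases lt_trichotomy i j with hij | rfl | hij
    · exact mul_nonneg (sub_nonneg.mpr (hfg i hi j hj hij)) (sub_nonneg.mpr (huv i hi j hj hij))
    · simp
    · rw [← neg_mul_neg, neg_sub, neg_sub]
      exact mul_nonneg (sub_nonneg.mpr (hfg j hj i hi hij)) (sub_nonneg.mpr (huv j hj i hi hij))
  have hsum : 0 < ∑ i ∈ s, ∑ j ∈ s, (f i * g j - f j * g i) * (u i * v j - u j * v i) :=
    sum_pos' (fun i hi => sum_nonneg (hterm i hi)) ⟨i₀, hi₀, sum_pos' (hterm i₀ hi₀)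
      ⟨j₀, hj₀, mul_pos (sub_pos.mpr hfg₀) (sub_pos.mpr huv₀)⟩⟩
  rw [← two_mul_sum_mul_sum_sub_sum_mul_sum] at hsum
  linarith

section Padding

variable {M : Type*} [Zero M]

def shiftSeq (a : ℕ → M) : ℕ → M
  | 0 => 0
  | i + 1 => a i

def reflectSeq (b : ℕ → M) (m i : ℕ) : M :=
  if i ≤ m then b (m - i) else 0

theorem reflectSeq_succ_succ (b : ℕ → M) (m i : ℕ) :
    reflectSeq b (m + 1) (i + 1) = reflectSeq b m i := by
  simp [reflectSeq]

theorem reflectSeq_nonneg [Preorder M] {b : ℕ → M} (hb : ∀ k, 0 ≤ b k) (m i : ℕ) :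
    0 ≤ reflectSeq b m i := by
  unfold reflectSeq
  split_ifs
  exacts [hb _, le_rfl]

end Padding

section Convolution

variable {R : Type*} [CommSemiring R]

def seqConv (a b : ℕ → R) (m : ℕ) : R :=
  ∑ p ∈ antidiagonal m, a p.1 * b p.2

def tupleConv {n : ℕ} (w : Fin n → ℕ → R) (m : ℕ) : R :=
  ∑ k ∈ Nat.antidiagonalTuple n m, ∏ i, w i (k i)

theorem tupleConv_one (w : Fin 1 → ℕ → R) : tupleConv w = w 0 := by
  ext m
  simp [tupleConv]

theorem tupleConv_succ {n : ℕ} (w : Fin (n + 1) → ℕ → R) :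
    tupleConv w = seqConv (w 0) (tupleConv (Fin.tail w)) := by
  ext m
  simp only [tupleConv, seqConv, Nat.sum_antidiagonalTuple_succ, Fin.prod_univ_succ,
    Fin.cons_zero, Fin.cons_succ, mul_sum, Fin.tail]

theorem sum_range_mul_reflectSeq (a b : ℕ → R) {m L : ℕ} (hm : m < L) :
    ∑ i ∈ range L, a i * reflectSeq b m i = seqConv a b m := by
  have hout : ∑ i ∈ Ico (m + 1) L, a i * reflectSeq b m i = 0 :=
    sum_eq_zero fun i hi => by simp [reflectSeq, Nat.not_le.mpr (mem_Ico.mp hi).1]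
  rw [seqConv, Nat.sum_antidiagonal_eq_sum_range_succ_mk, ← sum_range_add_sum_Ico _ hm, hout,
    add_zero]
  exact sum_congr rfl fun i hi => by simp [reflectSeq, Nat.lt_succ_iff.mp (mem_range.mp hi)]

theorem sum_range_succ_shiftSeq_mul (a x : ℕ → R) (L : ℕ) :
    ∑ i ∈ range (L + 1), shiftSeq a i * x i = ∑ i ∈ range L, a i * x (i + 1) := by
  simp [sum_range_succ', shiftSeq]

theorem multichoose_mul_pow_mul_eq (g k : ℕ) (r : R) :
    (Nat.multichoose g k * r ^ k) * (Nat.multichoose g (k + 2) * r ^ (k + 2))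
      = (Nat.multichoose g k * Nat.multichoose g (k + 2) : ℕ) * (r ^ (k + 1)) ^ 2 := by
  push_cast
  ring

end Convolution

section LogConcave

variable {R : Type*} [CommRing R] [LinearOrder R] [IsStrictOrderedRing R]

def LogConcaveSeq (a : ℕ → R) : Prop :=
  ∀ k, a k * a (k + 2) ≤ a (k + 1) ^ 2

variable {a b : ℕ → R}

theorem LogConcaveSeq.mul_le_mul_of_le (hlc : LogConcaveSeq a) (hpos : ∀ k, 0 < a k)
    {k l : ℕ} (hkl : k ≤ l) : a k * a (l + 1) ≤ a (k + 1) * a l := by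
  induction l, hkl using Nat.le_induction with
  | base => rw [mul_comm]
  | succ l _ ih =>
    refine le_of_mul_le_mul_right ?_ (mul_pos (hpos l) (hpos (l + 1)))
    calc a k * a (l + 1 + 1) * (a l * a (l + 1))
        = (a k * a (l + 1)) * (a l * a (l + 2)) := by ring
      _ ≤ (a (k + 1) * a l) * a (l + 1) ^ 2 :=
        mul_le_mul ih (hlc l) (mul_pos (hpos l) (hpos (l + 2))).le
          (mul_pos (hpos (k + 1)) (hpos l)).le
      _ = a (k + 1) * a (l + 1) * (a l * a (l + 1)) := by ring

theorem LogConcaveSeq.mul_shiftSeq_le (hlc : LogConcaveSeq a) (hpos : ∀ k, 0 < a k)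
    {i j : ℕ} (hij : i < j) : a j * shiftSeq a i ≤ a i * shiftSeq a j := by
  obtain ⟨j, rfl⟩ : ∃ j', j = j' + 1 := ⟨j - 1, by omega⟩
  rcases i with _ | i
  · simpa [shiftSeq] using (mul_pos (hpos 0) (hpos j)).le
  · simpa [shiftSeq, mul_comm] using hlc.mul_le_mul_of_le hpos (by omega : i ≤ j)

theorem LogConcaveSeq.reflectSeq_mul_le (hlc : LogConcaveSeq b) (hpos : ∀ k, 0 < b k) (m : ℕ)
    {i j : ℕ} (hij : i < j) :
    reflectSeq b m j * reflectSeq b (m + 1) i ≤ reflectSeq b m i * reflectSeq b (m + 1) j := by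
  by_cases hjm : j ≤ m
  · have h := hlc.mul_le_mul_of_le hpos (show m - j ≤ m - i by omega)
    rw [show m - i + 1 = m + 1 - i by omega, show m - j + 1 = m + 1 - j by omega] at h
    simpa [reflectSeq, hjm, hij.le.trans hjm, show i ≤ m + 1 by omega, show j ≤ m + 1 by omega,
      mul_comm] using h
  · have hnn := reflectSeq_nonneg (fun k => (hpos k).le)
    simpa [reflectSeq, hjm] using mul_nonneg (hnn m i) (hnn (m + 1) j)

theorem seqConv_pos (ha : ∀ k, 0 < a k) (hb : ∀ k, 0 < b k) (m : ℕ) : 0 < seqConv a b m :=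
  sum_pos (fun p _ => mul_pos (ha p.1) (hb p.2)) ⟨(0, m), by simp⟩

theorem seqConv_mul_seqConv_add_two_lt (hla : LogConcaveSeq a) (ha : ∀ k, 0 < a k)
    (hlb : LogConcaveSeq b) (hb : ∀ k, 0 < b k) (m : ℕ) :
    seqConv a b m * seqConv a b (m + 2) < seqConv a b (m + 1) ^ 2 := by
  -- Writing `c = seqConv a b`, the four sums over `range (m + 3)` are `c (m + 1)`, `c (m + 1)`,
  -- `c (m + 2)` and `c m`; the zero padding makes both minors at `(0, m + 2)` positive.
  have h := sum_mul_sum_lt_sum_mul_sum (s := range (m + 3)) (f := a) (g := shiftSeq a)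
    (u := reflectSeq b (m + 1)) (v := reflectSeq b (m + 2))
    (fun i _ j _ hij => hla.mul_shiftSeq_le ha hij)
    (fun i _ j _ hij => hlb.reflectSeq_mul_le hb (m + 1) hij)
    (i₀ := 0) (j₀ := m + 2) (by simp) (by simp)
    (by simpa [shiftSeq] using mul_pos (ha 0) (ha (m + 1)))
    (by simpa [reflectSeq] using mul_pos (hb (m + 1)) (hb 0))
  simp only [sum_range_succ_shiftSeq_mul, reflectSeq_succ_succ] at h
  rw [sum_range_mul_reflectSeq _ _ (by omega), sum_range_mul_reflectSeq _ _ (by omega),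
    sum_range_mul_reflectSeq _ _ (by omega), sum_range_mul_reflectSeq _ _ (by omega)] at h
  rw [sq]
  linarith

theorem tupleConv_pos {n : ℕ} {w : Fin (n + 1) → ℕ → R} (hpos : ∀ i k, 0 < w i k) (m : ℕ) :
    0 < tupleConv w m := by
  induction n generalizing m with
  | zero => simpa [tupleConv_one] using hpos 0 m
  | succ n ih =>
    rw [tupleConv_succ]
    exact seqConv_pos (hpos 0) (ih (fun i => hpos i.succ)) m

theorem logConcaveSeq_tupleConv {n : ℕ} {w : Fin (n + 1) → ℕ → R}
    (hlc : ∀ i, LogConcaveSeq (w i)) (hpos : ∀ i k, 0 < w i k) :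
    LogConcaveSeq (tupleConv w) := by
  induction n with
  | zero => simpa [tupleConv_one] using hlc 0
  | succ n ih =>
    rw [tupleConv_succ]
    exact fun m => (seqConv_mul_seqConv_add_two_lt (hlc 0) (hpos 0)
      (ih (fun i => hlc i.succ) (fun i => hpos i.succ)) (tupleConv_pos (fun i => hpos i.succ))
      m).le

theorem logConcaveSeq_multichoose_mul_pow (g : ℕ) (r : R) :
    LogConcaveSeq fun k => (Nat.multichoose g k : R) * r ^ k := by
  intro k
  rw [multichoose_mul_pow_mul_eq, mul_pow, ← Nat.cast_pow]
  exact mul_le_mul_of_nonneg_right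
    (by exact_mod_cast Nat.multichoose_mul_multichoose_add_two_le g k) (sq_nonneg _)

theorem multichoose_mul_pow_mul_lt {g : ℕ} (hg : 2 ≤ g) {r : R} (hr : r ≠ 0) (k : ℕ) :
    (Nat.multichoose g k * r ^ k) * (Nat.multichoose g (k + 2) * r ^ (k + 2))
      < ((Nat.multichoose g (k + 1) : R) * r ^ (k + 1)) ^ 2 := by
  rw [multichoose_mul_pow_mul_eq, mul_pow, ← Nat.cast_pow]
  exact mul_lt_mul_of_pos_right
    (by exact_mod_cast Nat.multichoose_mul_multichoose_add_two_lt hg k) (by positivity)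

end LogConcave

theorem GammaSum_eq_tupleConv (n : ℕ) (lam : Fin n → ℝ) (g : Fin n → ℕ) (β : ℝ) :
    GammaSum n lam g β
      = tupleConv fun i k => (Nat.multichoose (g i) k : ℝ) * Real.exp (-β * lam i) ^ k := by
  ext N
  refine sum_congr rfl fun k _ => ?_
  rw [prod_mul_distrib, mul_sum, Real.exp_sum]
  congr 1
  · simp [Nat.multichoose_eq, add_comm]
  · refine prod_congr rfl fun i _ => ?_
    rw [← Real.exp_nat_mul]
    ring_nf

theorem stmt_14_general (n : ℕ) (lam : Fin n → ℝ) (g : Fin n → ℕ)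
    (hg : ∀ i, 1 ≤ g i) (hG : 2 ≤ ∑ i, g i)
    (β : ℝ) (N : ℕ) (hN : 1 ≤ N) :
    GammaSum n lam g β N ^ 2 > GammaSum n lam g β (N - 1) * GammaSum n lam g β (N + 1) := by
  obtain ⟨k, rfl⟩ : ∃ k, N = k + 1 := ⟨N - 1, by omega⟩
  rw [GammaSum_eq_tupleConv, Nat.add_sub_cancel]
  have hpos : ∀ i k, 0 < (Nat.multichoose (g i) k : ℝ) * Real.exp (-β * lam i) ^ k :=
    fun i k => by have := Nat.multichoose_pos (hg i) k; positivity
  have hlc := fun i => logConcaveSeq_multichoose_mul_pow (g i) (Real.exp (-β * lam i))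
  rcases n with _ | _ | n
  · simp at hG
  · rw [tupleConv_one]
    exact multichoose_mul_pow_mul_lt (by simpa using hG) (Real.exp_pos _).ne' k
  · rw [tupleConv_succ]
    exact seqConv_mul_seqConv_add_two_lt (hlc 0) (hpos 0)
      (logConcaveSeq_tupleConv (fun i => hlc i.succ) (fun i => hpos i.succ))
      (tupleConv_pos (fun i => hpos i.succ)) k

theorem stmt_14 (n : ℕ) (lam : Fin n → ℝ) (g : Fin n → ℕ)
    (hlam : ∀ i, 0 < lam i) (hg : ∀ i, 1 ≤ g i) (hG : 2 ≤ ∑ i, g i)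
    (β : ℝ) (hβ : 0 < β) (N : ℕ) (hN : 1 ≤ N) :
    GammaSum n lam g β N ^ 2 > GammaSum n lam g β (N - 1) * GammaSum n lam g β (N + 1) :=
  stmt_14_general n lam g hg hG β N hN
end

section
/- Let Γ : ℕ → ℝ be positive with Γ(N)² > Γ(N-1)Γ(N+1) for all N ≥ 1, and Γ(N-1) < e^{βλ₁}Γ(N) for all N ≥ 1 (β, λ₁ > 0). Then for every N there exists ν > -λ₁ such that Γ(N) e^{-βNν} > Γ(N') e^{-βN'ν} for all N' ≠ N. -/
theorem stmt_16 (Γ : ℕ → ℝ) (hpos : ∀ N, 0 < Γ N) (β lam1 : ℝ)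
    (hβ : 0 < β) (hlam1 : 0 < lam1)
    (hconc : ∀ N : ℕ, Γ (N + 1) ^ 2 > Γ N * Γ (N + 2))
    (hgrow : ∀ N : ℕ, Γ N < Real.exp (β * lam1) * Γ (N + 1)) :
    ∀ N : ℕ, ∃ ν : ℝ, -lam1 < ν ∧
      ∀ N' : ℕ, N' ≠ N →
        Γ N * Real.exp (-β * N * ν) > Γ N' * Real.exp (-β * N' * ν) := by
  intro N
  set f : ℕ → ℝ := fun n => Real.log (Γ n) with hf
  have hΓexp : ∀ n, Γ n = Real.exp (f n) := fun n => (Real.exp_log (hpos n)).symm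
  -- strict concavity of f
  have hd : ∀ n : ℕ, f (n+2) - f (n+1) < f (n+1) - f n := by
    intro n
    have h := hconc n
    have hlog := Real.log_lt_log (mul_pos (hpos n) (hpos (n+2))) h
    rw [Real.log_mul (hpos n).ne' (hpos (n+2)).ne', Real.log_pow] at hlog
    simp only [hf]
    push_cast at hlog
    linarith
  -- slopes are antitone (strictly)
  have hmono : ∀ m n : ℕ, m < n → f (n+1) - f n < f (m+1) - f m := by
    intro m n h
    induction n with
    | zero => omega
    | succ k ih =>
      rcases Nat.lt_succ_iff_lt_or_eq.mp h with h' | h'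
      · exact lt_trans (hd k) (ih h')
      · subst h'; exact hd m
  have hmono' : ∀ m n : ℕ, m ≤ n → f (n+1) - f n ≤ f (m+1) - f m := by
    intro m n h
    rcases eq_or_lt_of_le h with rfl | h
    · exact le_rfl
    · exact (hmono m n h).le
  -- growth lower bound on slopes
  have hgrow' : ∀ n : ℕ, -(β*lam1) < f (n+1) - f n := by
    intro n
    have h := Real.log_lt_log (hpos n) (hgrow n)
    rw [Real.log_mul (Real.exp_pos _).ne' (hpos (n+1)).ne', Real.log_exp] at h
    simp only [hf]
    linarith
  -- choose the slope c = β * ν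
  obtain ⟨c, hc1, hc2, hc3⟩ :
      ∃ c : ℝ, f (N+1) - f N < c ∧ (∀ k, k < N → c < f (k+1) - f k) ∧ -(β*lam1) < c := by
    cases N with
    | zero =>
      exact ⟨f 1 - f 0 + 1, by simp, fun k hk => by omega, by linarith [hgrow' 0]⟩
    | succ M =>
      refine ⟨((f (M+2) - f (M+1)) + (f (M+1) - f M))/2, ?_, ?_, ?_⟩
      · have := hd M; linarith
      · intro k hk
        have hk' : k ≤ M := by omega
        have := hmono' k M hk'
        have := hd M
        linarith
      · have := hgrow' (M+1); have := hgrow' M; linarith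
  set g : ℕ → ℝ := fun n => f n - n * c with hg
  -- g increases strictly before N
  have gup : ∀ n : ℕ, n < N → g n < g (n+1) := by
    intro n hn
    have := hc2 n hn
    simp only [hg]
    push_cast
    linarith
  -- g decreases strictly after N
  have gdown : ∀ n : ℕ, N ≤ n → g (n+1) < g n := by
    intro n hn
    have h1 : f (n+1) - f n ≤ f (N+1) - f N := hmono' N n hn
    simp only [hg]
    push_cast
    linarith
  have hmax : ∀ n : ℕ, n ≠ N → g n < g N := by
    intro n hn
    rcases lt_or_gt_of_ne hn with h | h
    · -- n < N : climb up
      have key : ∀ m : ℕ, ∀ k : ℕ, k + m ≤ N → g k ≤ g (k + m) := by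
        intro m
        induction m with
        | zero => intro k _; simp
        | succ p ih =>
          intro k hk
          have h1 : g k ≤ g (k + p) := ih k (by omega)
          have h2 : g (k + p) < g (k + p + 1) := gup (k + p) (by omega)
          have h3 : k + p + 1 = k + (p + 1) := by omega
          rw [h3] at h2
          linarith
      have h1 : g n < g (n+1) := gup n h
      have h2 : g (n+1) ≤ g (n+1 + (N - (n+1))) := key (N - (n+1)) (n+1) (by omega)
      have h3 : n + 1 + (N - (n+1)) = N := by omega
      rw [h3] at h2
      linarith
    · -- N < n : descend
      have key : ∀ m : ℕ, g (N + m + 1) < g N := by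
        intro m
        induction m with
        | zero => simpa using gdown N le_rfl
        | succ p ih =>
          have h2 : g (N + p + 1 + 1) < g (N + p + 1) := gdown (N + p + 1) (by omega)
          have : N + (p+1) + 1 = N + p + 1 + 1 := by omega
          rw [this]
          linarith
      have h3 : N + (n - N - 1) + 1 = n := by omega
      have := key (n - N - 1)
      rwa [h3] at this
  refine ⟨c / β, ?_, ?_⟩
  · rw [neg_lt, ← neg_div, div_lt_iff₀ hβ]
    nlinarith
  · intro N' hN'
    have hexp : ∀ n : ℕ, Γ n * Real.exp (-β * n * (c / β)) = Real.exp (g n) := by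
      intro n
      rw [hΓexp n, ← Real.exp_add]
      congr 1
      simp only [hg]
      field_simp
      ring
    rw [hexp, hexp]
    exact Real.exp_lt_exp.mpr (hmax N' hN')
end
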